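/- arXiv:2012.14894 — 2 statements merged into one kernel-verified Lean document; each statement's English description precedes it below -/
import Mathlib

section
/- For {0,1}-valued random variables Z, A with E[ZA] > 0 and a,b ∈ (0,1) with max{a,b} < 1, define τ = τ(a,b) and ν(a,b) = (1/τ(a²,b²) - 1 + (1/τ(a,b) - 1)²)·τ(a,b)⁴ / E[ZA]. Then ν(a,b) ≤ τ(1-τ)(1 - (1-max{a,b})τ)² / max{a·E[A], b·E[Z]}. -/
open MeasureTheory

/-- The Tversky index `τ(a,b) = E[ZA] / (E[ZA] + a·E[A(1-Z)] + b·E[Z(1-A)])`. -/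
noncomputable def tversky {Ω : Type*} [MeasurableSpace Ω] (μ : Measure Ω)
    (Z A : Ω → ℝ) (a b : ℝ) : ℝ :=
  (∫ ω, Z ω * A ω ∂μ) /
    ((∫ ω, Z ω * A ω ∂μ) + a * (∫ ω, A ω * (1 - Z ω) ∂μ) +
      b * (∫ ω, Z ω * (1 - A ω) ∂μ))

/-- The asymptotic variance `ν(a,b)` of the Tversky index estimator. -/
noncomputable def nuvar {Ω : Type*} [MeasurableSpace Ω] (μ : MeasureTheory.Measure Ω)
    (Z A : Ω → ℝ) (a b : ℝ) : ℝ :=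
  (tversky μ Z A a b) ^ 4 *
      ((tversky μ Z A (a ^ 2) (b ^ 2))⁻¹ - 1 + ((tversky μ Z A a b)⁻¹ - 1) ^ 2) /
    (∫ ω, Z ω * A ω ∂μ)

lemma key_nuvar_algebra (p D D2 M m : ℝ) (hp : 0 < p) (hpD : p ≤ D) (hpD2 : p ≤ D2)
    (hM : 0 < M)
    (h1 : D2 - p ≤ m * (D - p)) (h2 : M ≤ D - (1 - m) * p) :
    (p/D)^4 * ((p/D2)⁻¹ - 1 + ((p/D)⁻¹ - 1)^2) / p ≤
      (p/D) * (1 - p/D) * (1 - (1-m) * (p/D))^2 / M := by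
  have hD : 0 < D := lt_of_lt_of_le hp hpD
  have hD2 : 0 < D2 := lt_of_lt_of_le hp hpD2
  have e1 : (p/D2)⁻¹ - 1 = (D2 - p)/p := by field_simp
  have e2 : (p/D)⁻¹ - 1 = (D - p)/p := by field_simp
  rw [e1, e2, div_le_div_iff₀ hp hM]
  have key2 : (p/D)^4 * ((D2-p)/p + ((D-p)/p)^2) * M
      = (p^3*(D2-p) + p^2*(D-p)^2) * M / D^4 := by field_simp
  have key3 : p/D * (1 - p/D) * (1 - (1-m)*(p/D))^2 * p
      = p^2*(D-p)*(D-(1-m)*p)^2 / D^4 := by field_simp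
  rw [key2, key3]
  have h3 : 0 ≤ D - p := by linarith
  have h4 : 0 < D - (1-m)*p := lt_of_lt_of_le hM h2
  have main : (p^3*(D2-p) + p^2*(D-p)^2) * M ≤ p^2*(D-p)*(D-(1-m)*p)^2 := by
    have step1 : (p^3*(D2-p) + p^2*(D-p)^2) * M ≤ (p^2*(D-p)) * ((m*p + (D-p)) * M) := by
      nlinarith [mul_le_mul_of_nonneg_left (mul_le_mul_of_nonneg_right h1 hM.le)
        (pow_nonneg hp.le 3)]
    have step2 : (p^2*(D-p)) * ((m*p + (D-p)) * M)
        ≤ (p^2*(D-p)) * ((D-(1-m)*p) * (D-(1-m)*p)) := by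
      have hmm : m*p + (D-p) = D - (1-m)*p := by ring
      rw [hmm]
      exact mul_le_mul_of_nonneg_left (mul_le_mul_of_nonneg_left h2 h4.le) (by positivity)
    calc _ ≤ _ := step1
      _ ≤ _ := step2
      _ = _ := by ring
  exact div_le_div_of_nonneg_right main (by positivity) |>.trans_eq rfl

theorem nuvar_le_bound
    {Ω : Type*} [MeasurableSpace Ω] (μ : Measure Ω) [IsProbabilityMeasure μ]
    (Z A : Ω → ℝ)
    (hZ01 : ∀ ω, Z ω = 0 ∨ Z ω = 1) (hA01 : ∀ ω, A ω = 0 ∨ A ω = 1)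
    (hZint : Integrable Z μ) (hAint : Integrable A μ)
    (hZAint : Integrable (fun ω => Z ω * A ω) μ)
    (hAZc : Integrable (fun ω => A ω * (1 - Z ω)) μ)
    (hZAc : Integrable (fun ω => Z ω * (1 - A ω)) μ)
    (hZA : 0 < ∫ ω, Z ω * A ω ∂μ)
    (a b : ℝ) (ha : a ∈ Set.Ioo (0 : ℝ) 1) (hb : b ∈ Set.Ioo (0 : ℝ) 1) :
    nuvar μ Z A a b ≤
      tversky μ Z A a b * (1 - tversky μ Z A a b) *
          (1 - (1 - max a b) * tversky μ Z A a b) ^ 2 /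
        max (a * (∫ ω, A ω ∂μ)) (b * (∫ ω, Z ω ∂μ)) := by
  obtain ⟨ha0, ha1⟩ := ha
  obtain ⟨hb0, hb1⟩ := hb
  set p := ∫ ω, Z ω * A ω ∂μ with hp_def
  set q := ∫ ω, A ω * (1 - Z ω) ∂μ with hq_def
  set r := ∫ ω, Z ω * (1 - A ω) ∂μ with hr_def
  have hq : 0 ≤ q := by
    apply integral_nonneg
    intro ω
    rcases hA01 ω with h | h <;> rcases hZ01 ω with h' | h' <;> simp [h, h']
  have hr : 0 ≤ r := by
    apply integral_nonneg
    intro ω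
    rcases hA01 ω with h | h <;> rcases hZ01 ω with h' | h' <;> simp [h, h']
  have hEA : (∫ ω, A ω ∂μ) = p + q := by
    have h1 : (∫ ω, A ω ∂μ) = ∫ ω, (Z ω * A ω + A ω * (1 - Z ω)) ∂μ := by
      apply integral_congr_ae
      filter_upwards with ω
      ring
    rw [h1, integral_add hZAint hAZc]
  have hEZ : (∫ ω, Z ω ∂μ) = p + r := by
    have h1 : (∫ ω, Z ω ∂μ) = ∫ ω, (Z ω * A ω + Z ω * (1 - A ω)) ∂μ := by
      apply integral_congr_ae
      filter_upwards with ω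
      ring
    rw [h1, integral_add hZAint hZAc]
  set m := max a b with hm_def
  have ham : a ≤ m := le_max_left a b
  have hbm : b ≤ m := le_max_right a b
  have hm0 : 0 < m := lt_of_lt_of_le ha0 ham
  have hM : 0 < max (a * (p + q)) (b * (p + r)) :=
    lt_of_lt_of_le (by positivity) (le_max_left _ _)
  rw [hEA, hEZ]
  simp only [nuvar, tversky, ← hp_def, ← hq_def, ← hr_def]
  apply key_nuvar_algebra
  · exact hZA
  · nlinarith
  · nlinarith
  · exact hM
  · nlinarith [mul_le_mul_of_nonneg_right (mul_le_mul_of_nonneg_right ham hq) ha0.le,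
      mul_le_mul_of_nonneg_right (mul_le_mul_of_nonneg_right hbm hr) hb0.le]
  · apply max_le
    · nlinarith
    · nlinarith
end

section
/- For {0,1}-valued random variables Z, A with E[ZA] > 0, 0 < a,b < 1, and c = 1/(1-max{a,b}), the asymptotic variance satisfies ν(a,b) ≤ sup_{τ∈(0,1)} τ(1-τ)(1-τ/c)² / (b·E[Z]). -/
open MeasureTheory

set_option maxHeartbeats 1000000

theorem nuvar_le_sup_bound
    {Ω : Type*} [MeasurableSpace Ω] (μ : Measure Ω) [IsProbabilityMeasure μ]
    (Z A : Ω → ℝ)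
    (hZ01 : ∀ ω, Z ω = 0 ∨ Z ω = 1) (hA01 : ∀ ω, A ω = 0 ∨ A ω = 1)
    (hZint : Integrable Z μ) (hAint : Integrable A μ)
    (hZAint : Integrable (fun ω => Z ω * A ω) μ)
    (hAZc : Integrable (fun ω => A ω * (1 - Z ω)) μ)
    (hZAc : Integrable (fun ω => Z ω * (1 - A ω)) μ)
    (hZA : 0 < ∫ ω, Z ω * A ω ∂μ)
    (a b : ℝ) (ha : a ∈ Set.Ioo (0 : ℝ) 1) (hb : b ∈ Set.Ioo (0 : ℝ) 1) :
    nuvar μ Z A a b ≤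
      sSup ((fun τ : ℝ => τ * (1 - τ) * (1 - τ / (1 / (1 - max a b))) ^ 2) ''
          Set.Ioo (0 : ℝ) 1) /
        (b * (∫ ω, Z ω ∂μ)) := by
  set m := max a b with hmdef
  have ham : a ≤ m := le_max_left a b
  have hbm : b ≤ m := le_max_right a b
  have hm0 : 0 < m := lt_of_lt_of_le ha.1 ham
  have hm1 : m < 1 := max_lt ha.2 hb.2
  set P : ℝ := ∫ ω, Z ω * A ω ∂μ with hPdef
  set Q : ℝ := ∫ ω, A ω * (1 - Z ω) ∂μ with hQdef
  set R : ℝ := ∫ ω, Z ω * (1 - A ω) ∂μ with hRdef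
  have hP : 0 < P := hZA
  have hQ : 0 ≤ Q := by
    apply integral_nonneg
    intro ω
    rcases hA01 ω with h | h <;> rcases hZ01 ω with h2 | h2 <;> simp [h, h2]
  have hR : 0 ≤ R := by
    apply integral_nonneg
    intro ω
    rcases hA01 ω with h | h <;> rcases hZ01 ω with h2 | h2 <;> simp [h, h2]
  have hEZ : (∫ ω, Z ω ∂μ) = P + R := by
    have h1 : (fun ω => Z ω) = fun ω => Z ω * A ω + Z ω * (1 - A ω) := by
      funext ω; ring
    calc (∫ ω, Z ω ∂μ) = ∫ ω, (Z ω * A ω + Z ω * (1 - A ω)) ∂μ := by rw [← h1]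
      _ = P + R := by rw [hPdef, hRdef]; exact integral_add hZAint hZAc
  clear_value P Q R
  have hSnn : 0 ≤ a * Q + b * R :=
    add_nonneg (mul_nonneg ha.1.le hQ) (mul_nonneg hb.1.le hR)
  have hTnn : 0 ≤ a ^ 2 * Q + b ^ 2 * R :=
    add_nonneg (mul_nonneg (by positivity) hQ) (mul_nonneg (by positivity) hR)
  have hPS : 0 < P + a * Q + b * R := by linarith
  have hPT : 0 < P + a ^ 2 * Q + b ^ 2 * R := by linarith
  have hTS : a ^ 2 * Q + b ^ 2 * R ≤ m * (a * Q + b * R) := by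
    have h1 : a ^ 2 * Q ≤ m * (a * Q) := by
      nlinarith [mul_le_mul_of_nonneg_right ham (mul_nonneg ha.1.le hQ)]
    have h2 : b ^ 2 * R ≤ m * (b * R) := by
      nlinarith [mul_le_mul_of_nonneg_right hbm (mul_nonneg hb.1.le hR)]
    nlinarith
  have hbEZ : 0 < b * (P + R) := by
    have h : 0 < P + R := by linarith
    exact mul_pos hb.1 h
  have hν : nuvar μ Z A a b =
      P * ((a ^ 2 * Q + b ^ 2 * R) * P + (a * Q + b * R) ^ 2) /
        (P + a * Q + b * R) ^ 4 := by
    rw [nuvar, tversky, tversky, ← hPdef, ← hQdef, ← hRdef]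
    field_simp
    ring
  have hbdd : BddAbove ((fun τ : ℝ => τ * (1 - τ) * (1 - τ / (1 / (1 - m))) ^ 2) ''
      Set.Ioo (0 : ℝ) 1) := by
    refine ⟨1, ?_⟩
    rintro y ⟨x, hx, rfl⟩
    show x * (1 - x) * (1 - x / (1 / (1 - m))) ^ 2 ≤ 1
    rw [div_div_eq_mul_div, div_one]
    have hu : 0 < x * (1 - m) := mul_pos hx.1 (by linarith)
    have hu1 : x * (1 - m) < 1 := by nlinarith [hx.2]
    have e1 : (1 - x * (1 - m)) ^ 2 ≤ 1 := by nlinarith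
    have e2 : x * (1 - x) ≤ 1 := by nlinarith [hx.1, hx.2]
    calc x * (1 - x) * (1 - x * (1 - m)) ^ 2 ≤ 1 * 1 :=
          mul_le_mul e2 e1 (sq_nonneg _) (by norm_num)
      _ = 1 := by norm_num
  rw [hEZ, hν]
  rcases eq_or_lt_of_le hSnn with hS0 | hSpos
  · -- degenerate case: a*Q + b*R = 0
    have hT0 : a ^ 2 * Q + b ^ 2 * R = 0 := le_antisymm (by nlinarith) hTnn
    have hzero : P * ((a ^ 2 * Q + b ^ 2 * R) * P + (a * Q + b * R) ^ 2) = 0 := by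
      rw [hT0, ← hS0]; ring
    rw [hzero, zero_div]
    apply div_nonneg _ hbEZ.le
    have hhalf : ((1:ℝ)/2) ∈ Set.Ioo (0:ℝ) 1 := by norm_num
    have h0 : (0:ℝ) ≤ (1/2 : ℝ) * (1 - 1/2) * (1 - (1/2) / (1 / (1 - m))) ^ 2 := by positivity
    calc (0:ℝ) ≤ (1/2 : ℝ) * (1 - 1/2) * (1 - (1/2) / (1 / (1 - m))) ^ 2 := h0
      _ ≤ _ := le_csSup hbdd ⟨1/2, hhalf, rfl⟩
  · set τ : ℝ := P / (P + a * Q + b * R) with hτdef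
    have hτmem : τ ∈ Set.Ioo (0:ℝ) 1 := by
      constructor
      · exact div_pos hP hPS
      · rw [hτdef, div_lt_one hPS]; linarith
    have hle2 : τ * (1 - τ) * (1 - τ / (1 / (1 - m))) ^ 2 ≤
        sSup ((fun τ : ℝ => τ * (1 - τ) * (1 - τ / (1 / (1 - m))) ^ 2) ''
          Set.Ioo (0 : ℝ) 1) := le_csSup hbdd ⟨τ, hτmem, rfl⟩
    have hle1 : P * ((a ^ 2 * Q + b ^ 2 * R) * P + (a * Q + b * R) ^ 2) /
        (P + a * Q + b * R) ^ 4 ≤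
        τ * (1 - τ) * (1 - τ / (1 / (1 - m))) ^ 2 / (b * (P + R)) := by
      rw [div_div_eq_mul_div, div_one]
      rw [div_le_div_iff₀ (by positivity) hbEZ]
      have hfeq : τ * (1 - τ) * (1 - τ * (1 - m)) ^ 2 * (P + a * Q + b * R) ^ 4 =
          P * (a * Q + b * R) * ((a * Q + b * R) + m * P) ^ 2 := by
        rw [hτdef]
        field_simp
        ring
      rw [hfeq]
      have h1' : (a ^ 2 * Q + b ^ 2 * R) * P ≤ m * (a * Q + b * R) * P := by
        have := mul_le_mul_of_nonneg_right hTS hP.le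
        linarith
      have h1 : (a ^ 2 * Q + b ^ 2 * R) * P + (a * Q + b * R) ^ 2 ≤
          (a * Q + b * R) * (m * P + (a * Q + b * R)) := by
        calc (a ^ 2 * Q + b ^ 2 * R) * P + (a * Q + b * R) ^ 2
            ≤ m * (a * Q + b * R) * P + (a * Q + b * R) ^ 2 := by linarith
          _ = (a * Q + b * R) * (m * P + (a * Q + b * R)) := by ring
      have h2 : b * (P + R) ≤ m * P + (a * Q + b * R) := by
        have hb1 : b * P ≤ m * P := mul_le_mul_of_nonneg_right hbm hP.le
        have hb2 : 0 ≤ a * Q := mul_nonneg ha.1.le hQ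
        nlinarith
      have hSMnn : (0:ℝ) ≤ (a * Q + b * R) * (m * P + (a * Q + b * R)) := by
        have : (0:ℝ) ≤ m * P := mul_nonneg hm0.le hP.le
        exact mul_nonneg hSnn (by linarith)
      have h3 := mul_le_mul h1 h2 hbEZ.le hSMnn
      calc P * ((a ^ 2 * Q + b ^ 2 * R) * P + (a * Q + b * R) ^ 2) * (b * (P + R))
          = P * (((a ^ 2 * Q + b ^ 2 * R) * P + (a * Q + b * R) ^ 2) * (b * (P + R))) := by
            ring
        _ ≤ P * ((a * Q + b * R) * (m * P + (a * Q + b * R)) * (m * P + (a * Q + b * R))) :=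
            mul_le_mul_of_nonneg_left h3 hP.le
        _ = P * (a * Q + b * R) * (a * Q + b * R + m * P) ^ 2 := by ring
    exact hle1.trans ((div_le_div_iff_of_pos_right hbEZ).mpr hle2)
end
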